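/- arXiv:2110.09518 — 4 statements merged into one kernel-verified Lean document; each statement's English description precedes it below -/
import Mathlib

section
/- Let X, Y be Hilbert spaces, B : X → X and R : Y → Y positive self-adjoint boundedly invertible operators, A : X → Y bounded linear, and K = B A* (R + A B A*)^{-1}. Then the updated operator B' = (I − K A) B satisfies B' = (B^{-1} + A* R^{-1} A)^{-1}; in particular B' is again positive, self-adjoint, and boundedly invertible. -/
set_option maxHeartbeats 1000000


open ContinuousLinearMap

/-- Kalman covariance update: with `B`, `R` positive self-adjoint boundedly invertible
(two-sided inverses `Binv`, `Rinv`), `A` bounded linear, `K = B A* (R + A B A*)⁻¹`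
(with `Sinv` a two-sided inverse of `R + A B A*`), the updated operator
`B' = (I − K A) B` satisfies `B' = (B⁻¹ + A* R⁻¹ A)⁻¹` (where `Minv` is a two-sided
inverse of `B⁻¹ + A* R⁻¹ A`); in particular `B'` is positive, self-adjoint, and bijective. -/
theorem kalman_covariance_update
    {X Y : Type*} [NormedAddCommGroup X] [InnerProductSpace ℂ X] [CompleteSpace X]
    [NormedAddCommGroup Y] [InnerProductSpace ℂ Y] [CompleteSpace Y]
    (A : X →L[ℂ] Y) (B : X →L[ℂ] X) (R : Y →L[ℂ] Y)
    (hB : B.IsPositive) (hR : R.IsPositive)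
    (Binv : X →L[ℂ] X) (hBinv₁ : Binv.comp B = ContinuousLinearMap.id ℂ X)
    (hBinv₂ : B.comp Binv = ContinuousLinearMap.id ℂ X)
    (Rinv : Y →L[ℂ] Y) (hRinv₁ : Rinv.comp R = ContinuousLinearMap.id ℂ Y)
    (hRinv₂ : R.comp Rinv = ContinuousLinearMap.id ℂ Y)
    (Sinv : Y →L[ℂ] Y)
    (hSinv₁ : Sinv.comp (R + A.comp (B.comp (adjoint A))) = ContinuousLinearMap.id ℂ Y)
    (hSinv₂ : (R + A.comp (B.comp (adjoint A))).comp Sinv = ContinuousLinearMap.id ℂ Y)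
    (Minv : X →L[ℂ] X)
    (hMinv₁ : Minv.comp (Binv + (adjoint A).comp (Rinv.comp A)) = ContinuousLinearMap.id ℂ X)
    (hMinv₂ : (Binv + (adjoint A).comp (Rinv.comp A)).comp Minv = ContinuousLinearMap.id ℂ X)
    (K : Y →L[ℂ] X) (hK : K = B.comp ((adjoint A).comp Sinv))
    (B' : X →L[ℂ] X)
    (hB' : B' = (ContinuousLinearMap.id ℂ X - K.comp A).comp B) :
    B' = Minv ∧ B'.IsPositive ∧ IsSelfAdjoint B' ∧ Function.Bijective B' := by
  -- pointwise versions of the inverse identities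
  have hBB : ∀ x, Binv (B x) = x := fun x => by
    simpa using DFunLike.congr_fun hBinv₁ x
  have hBB' : ∀ x, B (Binv x) = x := fun x => by
    simpa using DFunLike.congr_fun hBinv₂ x
  have hRR : ∀ y, Rinv (R y) = y := fun y => by
    simpa using DFunLike.congr_fun hRinv₁ y
  have hRR' : ∀ y, R (Rinv y) = y := fun y => by
    simpa using DFunLike.congr_fun hRinv₂ y
  have hSS : ∀ y, Sinv (R y + A (B (adjoint A y))) = y := fun y => by
    simpa using DFunLike.congr_fun hSinv₁ y
  have hSS' : ∀ y, R (Sinv y) + A (B (adjoint A (Sinv y))) = y := fun y => by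
    simpa using DFunLike.congr_fun hSinv₂ y
  set M : X →L[ℂ] X := Binv + (adjoint A).comp (Rinv.comp A) with hM
  have key1 : ∀ y, Rinv y = Sinv y + Rinv (A (B (adjoint A (Sinv y)))) := by
    intro y
    conv_lhs => rw [← hSS' y]
    rw [map_add, hRR]
  have key2 : ∀ y, Rinv y = Sinv y + Sinv (A (B (adjoint A (Rinv y)))) := by
    intro y
    have h := hSS (Rinv y)
    rw [hRR', map_add] at h
    exact h.symm
  have hB'x : ∀ x, B' x = B x - B (adjoint A (Sinv (A (B x)))) := fun x => by
    rw [hB', hK]; simp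
  have hMB' : M.comp B' = ContinuousLinearMap.id ℂ X := by
    ext x
    simp only [hM, comp_apply, add_apply, coe_id', id_eq, hB'x, map_sub, hBB]
    rw [key1 (A (B x))]
    simp only [map_add]
    abel
  have hB'M : B'.comp M = ContinuousLinearMap.id ℂ X := by
    ext x
    have hz : B (Binv x + (adjoint A) (Rinv (A x))) = x + B ((adjoint A) (Rinv (A x))) := by
      rw [map_add, hBB']
    have hkey : Sinv (A x + A (B ((adjoint A) (Rinv (A x))))) = Rinv (A x) := by
      rw [map_add]; exact (key2 (A x)).symm
    calc (B'.comp M) x = B' (Binv x + (adjoint A) (Rinv (A x))) := by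
          simp [hM]
      _ = B (Binv x + (adjoint A) (Rinv (A x)))
          - B ((adjoint A) (Sinv (A (B (Binv x + (adjoint A) (Rinv (A x))))))) := hB'x _
      _ = x + B ((adjoint A) (Rinv (A x)))
          - B ((adjoint A) (Sinv (A x + A (B ((adjoint A) (Rinv (A x))))))) := by
          rw [hz, map_add]
      _ = x + B ((adjoint A) (Rinv (A x))) - B ((adjoint A) (Rinv (A x))) := by rw [hkey]
      _ = ContinuousLinearMap.id ℂ X x := by simp
  have hEq : B' = Minv := by
    calc B' = B'.comp (M.comp Minv) := by rw [hMinv₂]; ext x; simp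
      _ = (B'.comp M).comp Minv := by rw [comp_assoc]
      _ = Minv := by rw [hB'M]; ext x; simp
  -- Binv is positive
  have hBinvpos : Binv.IsPositive := by
    have h1 : (Binv ∘L B ∘L adjoint Binv).IsPositive := hB.conj_adjoint Binv
    have h2 : Binv ∘L B ∘L adjoint Binv = adjoint Binv := by
      rw [← comp_assoc, hBinv₁, id_comp]
    rw [h2] at h1
    have hsa : adjoint Binv = Binv := by
      have := h1.isSelfAdjoint
      rw [isSelfAdjoint_iff', adjoint_adjoint] at this; exact this.symm
    rwa [hsa] at h1
  have hRinvpos : Rinv.IsPositive := by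
    have h1 : (Rinv ∘L R ∘L adjoint Rinv).IsPositive := hR.conj_adjoint Rinv
    have h2 : Rinv ∘L R ∘L adjoint Rinv = adjoint Rinv := by
      rw [← comp_assoc, hRinv₁, id_comp]
    rw [h2] at h1
    have hsa : adjoint Rinv = Rinv := by
      have := h1.isSelfAdjoint
      rw [isSelfAdjoint_iff', adjoint_adjoint] at this; exact this.symm
    rwa [hsa] at h1
  have hMpos : M.IsPositive := hBinvpos.add (hRinvpos.adjoint_conj A)
  have hMinvpos : Minv.IsPositive := by
    have h1 : (Minv ∘L M ∘L adjoint Minv).IsPositive := hMpos.conj_adjoint Minv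
    have h2 : Minv ∘L M ∘L adjoint Minv = adjoint Minv := by
      rw [← comp_assoc, hMinv₁, id_comp]
    rw [h2] at h1
    have hsa : adjoint Minv = Minv := by
      have := h1.isSelfAdjoint
      rw [isSelfAdjoint_iff', adjoint_adjoint] at this; exact this.symm
    rwa [hsa] at h1
  refine ⟨hEq, hEq ▸ hMinvpos, hEq ▸ hMinvpos.isSelfAdjoint, hEq ▸ ?_⟩
  rw [Function.bijective_iff_has_inverse]
  exact ⟨M, fun x => by simpa using DFunLike.congr_fun hMinv₂ x,
    fun x => by simpa using DFunLike.congr_fun hMinv₁ x⟩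
end

section
/- Let X, Y be Hilbert spaces, A₁, A₂ : X → Y bounded linear operators, R : Y → Y positive self-adjoint boundedly invertible, α > 0, and f₁, f₂ ∈ Y. Let φ₀ ∈ X, B₀ = (1/α) I. Define sequentially, for n = 1, 2: K_n = B_{n−1} A_n* (R + A_n B_{n−1} A_n*)^{-1}, φ_n = φ_{n−1} + K_n (f_n − A_n φ_{n−1}), B_n = (I − K_n A_n) B_{n−1}. Let Ā : X → Y × Y be Ā φ = (A₁φ, A₂φ) and f̄ = (f₁, f₂), and equip Y × Y with the weighted inner product ⟨·, (R^{-1}⊕R^{-1})·⟩. Then φ₂ equals the Tikhonov solution φ₀ + (αI + Ā* Ā)^{-1} Ā* (f̄ − Ā φ₀), where Ā* is the adjoint with respect to this weighted inner product. -/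
open ContinuousLinearMap

private lemma kalman_step_aux
    {X Y : Type*} [NormedAddCommGroup X] [InnerProductSpace ℂ X] [CompleteSpace X]
    [NormedAddCommGroup Y] [InnerProductSpace ℂ Y] [CompleteSpace Y]
    (A : X →L[ℂ] Y) (R Rinv Sinv : Y →L[ℂ] Y) (B M' : X →L[ℂ] X)
    (hRinv₁ : Rinv.comp R = ContinuousLinearMap.id ℂ Y)
    (hRinv₂ : R.comp Rinv = ContinuousLinearMap.id ℂ Y)
    (hS₁ : Sinv.comp (R + A.comp (B.comp (adjoint A))) = ContinuousLinearMap.id ℂ Y)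
    (hS₂ : (R + A.comp (B.comp (adjoint A))).comp Sinv = ContinuousLinearMap.id ℂ Y)
    (hM'B : ∀ x, M' (B x) = x + (adjoint A) (Rinv (A (B x))))
    (hBM' : ∀ x, B (M' x) = x + B ((adjoint A) (Rinv (A x)))) :
    (∀ y, M' (B ((adjoint A) (Sinv y))) = (adjoint A) (Rinv y)) ∧
    (∀ x, M' (B x - B ((adjoint A) (Sinv (A (B x))))) = x) ∧
    (∀ x, B (M' x) - B ((adjoint A) (Sinv (A (B (M' x))))) = x) := by
  have hRR : ∀ y, Rinv (R y) = y := fun y => ContinuousLinearMap.ext_iff.mp hRinv₁ y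
  have hRR' : ∀ y, R (Rinv y) = y := fun y => ContinuousLinearMap.ext_iff.mp hRinv₂ y
  have hS₁' : ∀ y, Sinv (R y + A (B ((adjoint A) y))) = y := by
    intro y
    have := ContinuousLinearMap.ext_iff.mp hS₁ y
    simpa [ContinuousLinearMap.comp_apply, ContinuousLinearMap.add_apply] using this
  have hS₂' : ∀ y, R (Sinv y) + A (B ((adjoint A) (Sinv y))) = y := by
    intro y
    have := ContinuousLinearMap.ext_iff.mp hS₂ y
    simpa [ContinuousLinearMap.comp_apply, ContinuousLinearMap.add_apply] using this
  have part1 : ∀ y, M' (B ((adjoint A) (Sinv y))) = (adjoint A) (Rinv y) := by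
    intro y
    rw [hM'B]
    have h := congrArg Rinv (hS₂' y)
    rw [map_add, hRR] at h
    rw [← map_add (adjoint A), h]
  refine ⟨part1, ?_, ?_⟩
  · intro x
    rw [map_sub, hM'B, part1 (A (B x))]
    abel
  · intro x
    rw [hBM' x]
    have hz : Sinv (A (x + B ((adjoint A) (Rinv (A x))))) = Rinv (A x) := by
      have := hS₁' (Rinv (A x))
      rw [hRR'] at this
      rw [map_add, this]
    rw [hz]
    abel

/-- Two-measurement equivalence of the sequential Kalman filter and full-data Tikhonov
regularization. With `R` positive self-adjoint boundedly invertible (inverse `Rinv`),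
`B₀ = (1/α) I`, and the Kalman recursion
`Kₙ = Bₙ₋₁ Aₙᴴ (R + Aₙ Bₙ₋₁ Aₙᴴ)⁻¹`, `φₙ = φₙ₋₁ + Kₙ (fₙ − Aₙ φₙ₋₁)`,
`Bₙ = (I − Kₙ Aₙ) Bₙ₋₁`, the final state `φ₂` equals the weighted Tikhonov solution
`φ₀ + (αI + Ā*Ā)⁻¹ Ā*(f̄ − Ā φ₀)`, where `Ā φ = (A₁ φ, A₂ φ)`, `f̄ = (f₁, f₂)`, and the
adjoint `Ā*` is taken with respect to the `R⁻¹ ⊕ R⁻¹`-weighted inner product on `Y × Y`,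
so that `Ā*Ā = A₁ᴴ R⁻¹ A₁ + A₂ᴴ R⁻¹ A₂` and
`Ā*(f̄ − Ā φ₀) = A₁ᴴ R⁻¹ (f₁ − A₁ φ₀) + A₂ᴴ R⁻¹ (f₂ − A₂ φ₀)`. -/
theorem kalman_two_step_eq_tikhonov
    {X Y : Type*} [NormedAddCommGroup X] [InnerProductSpace ℂ X] [CompleteSpace X]
    [NormedAddCommGroup Y] [InnerProductSpace ℂ Y] [CompleteSpace Y]
    (A₁ A₂ : X →L[ℂ] Y) (R : Y →L[ℂ] Y) (hR : R.IsPositive)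
    (Rinv : Y →L[ℂ] Y) (hRinv₁ : Rinv.comp R = ContinuousLinearMap.id ℂ Y)
    (hRinv₂ : R.comp Rinv = ContinuousLinearMap.id ℂ Y)
    (α : ℝ) (hα : 0 < α) (f₁ f₂ : Y) (φ₀ : X)
    (B₀ : X →L[ℂ] X) (hB₀ : B₀ = (α⁻¹ : ℂ) • (ContinuousLinearMap.id ℂ X))
    (S₁inv : Y →L[ℂ] Y)
    (hS₁inv₁ : S₁inv.comp (R + A₁.comp (B₀.comp (adjoint A₁))) = ContinuousLinearMap.id ℂ Y)
    (hS₁inv₂ : (R + A₁.comp (B₀.comp (adjoint A₁))).comp S₁inv = ContinuousLinearMap.id ℂ Y)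
    (K₁ : Y →L[ℂ] X) (hK₁ : K₁ = B₀.comp ((adjoint A₁).comp S₁inv))
    (φ₁ : X) (hφ₁ : φ₁ = φ₀ + K₁ (f₁ - A₁ φ₀))
    (B₁ : X →L[ℂ] X) (hB₁ : B₁ = (ContinuousLinearMap.id ℂ X - K₁.comp A₁).comp B₀)
    (S₂inv : Y →L[ℂ] Y)
    (hS₂inv₁ : S₂inv.comp (R + A₂.comp (B₁.comp (adjoint A₂))) = ContinuousLinearMap.id ℂ Y)
    (hS₂inv₂ : (R + A₂.comp (B₁.comp (adjoint A₂))).comp S₂inv = ContinuousLinearMap.id ℂ Y)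
    (K₂ : Y →L[ℂ] X) (hK₂ : K₂ = B₁.comp ((adjoint A₂).comp S₂inv))
    (φ₂ : X) (hφ₂ : φ₂ = φ₁ + K₂ (f₂ - A₂ φ₁))
    (Minv : X →L[ℂ] X)
    (hMinv₁ : Minv.comp ((α : ℂ) • (ContinuousLinearMap.id ℂ X)
        + (adjoint A₁).comp (Rinv.comp A₁) + (adjoint A₂).comp (Rinv.comp A₂))
      = ContinuousLinearMap.id ℂ X)
    (hMinv₂ : ((α : ℂ) • (ContinuousLinearMap.id ℂ X)
        + (adjoint A₁).comp (Rinv.comp A₁) + (adjoint A₂).comp (Rinv.comp A₂)).comp Minv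
      = ContinuousLinearMap.id ℂ X) :
    φ₂ = φ₀ + Minv ((adjoint A₁) (Rinv (f₁ - A₁ φ₀)) + (adjoint A₂) (Rinv (f₂ - A₂ φ₀))) := by
  have hαne : (α : ℂ) ≠ 0 := by
    exact_mod_cast (Complex.ofReal_ne_zero).mpr hα.ne'
  set M₁ : X →L[ℂ] X := (α : ℂ) • (ContinuousLinearMap.id ℂ X)
      + (adjoint A₁).comp (Rinv.comp A₁) with hM₁def
  set M : X →L[ℂ] X := M₁ + (adjoint A₂).comp (Rinv.comp A₂) with hMdef
  -- pointwise formulas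
  have hM₁p : ∀ x, M₁ x = (α : ℂ) • x + (adjoint A₁) (Rinv (A₁ x)) := by
    intro x; simp [hM₁def]
  have hMp : ∀ x, M x = M₁ x + (adjoint A₂) (Rinv (A₂ x)) := by
    intro x; simp [hMdef]
  have hB₀p : ∀ x, B₀ x = (α⁻¹ : ℂ) • x := by intro x; simp [hB₀]
  have hK₁p : ∀ y, K₁ y = B₀ ((adjoint A₁) (S₁inv y)) := by
    intro y; rw [hK₁]; simp
  have hK₂p : ∀ y, K₂ y = B₁ ((adjoint A₂) (S₂inv y)) := by
    intro y; rw [hK₂]; simp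
  have hB₁p : ∀ x, B₁ x = B₀ x - B₀ ((adjoint A₁) (S₁inv (A₁ (B₀ x)))) := by
    intro x; rw [hB₁]; simp [hK₁p]
  -- instance 1
  have hM₁B₀ : ∀ x, M₁ (B₀ x) = x + (adjoint A₁) (Rinv (A₁ (B₀ x))) := by
    intro x
    rw [hM₁p (B₀ x)]
    congr 1
    rw [hB₀p, smul_smul, mul_inv_cancel₀ hαne, one_smul]
  have hB₀M₁ : ∀ x, B₀ (M₁ x) = x + B₀ ((adjoint A₁) (Rinv (A₁ x))) := by
    intro x
    rw [hM₁p x, map_add]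
    congr 1
    rw [hB₀p, smul_smul, inv_mul_cancel₀ hαne, one_smul]
  obtain ⟨p1a, p1b, p1c⟩ := kalman_step_aux A₁ R Rinv S₁inv B₀ M₁ hRinv₁ hRinv₂
    hS₁inv₁ hS₁inv₂ hM₁B₀ hB₀M₁
  have q1a : ∀ y, M₁ (K₁ y) = (adjoint A₁) (Rinv y) := by
    intro y; rw [hK₁p]; exact p1a y
  have q1b : ∀ x, M₁ (B₁ x) = x := by
    intro x; rw [hB₁p]; exact p1b x
  have q1c : ∀ x, B₁ (M₁ x) = x := by
    intro x; rw [hB₁p]; exact p1c x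
  -- instance 2
  have hMB₁ : ∀ x, M (B₁ x) = x + (adjoint A₂) (Rinv (A₂ (B₁ x))) := by
    intro x; rw [hMp, q1b]
  have hB₁M : ∀ x, B₁ (M x) = x + B₁ ((adjoint A₂) (Rinv (A₂ x))) := by
    intro x; rw [hMp, map_add, q1c]
  obtain ⟨p2a, p2b, _⟩ := kalman_step_aux A₂ R Rinv S₂inv B₁ M hRinv₁ hRinv₂
    hS₂inv₁ hS₂inv₂ hMB₁ hB₁M
  have q2a : ∀ y, M (K₂ y) = (adjoint A₂) (Rinv y) := by
    intro y; rw [hK₂p]; exact p2a y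
  have q2b : ∀ x, M (B₁ x - K₂ (A₂ (B₁ x))) = x := by
    intro x; rw [hK₂p]; exact p2b x
  -- combined identity
  have hfinal : ∀ y, M (K₁ y - K₂ (A₂ (K₁ y))) = (adjoint A₁) (Rinv y) := by
    intro y
    have h := q2b (M₁ (K₁ y))
    rw [q1c (K₁ y)] at h
    rw [h, q1a]
  -- assemble
  set r₁ := f₁ - A₁ φ₀ with hr₁
  set r₂ := f₂ - A₂ φ₀ with hr₂
  set u := K₁ r₁ + K₂ (r₂ - A₂ (K₁ r₁)) with hu
  have hφ₂u : φ₂ = φ₀ + u := by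
    rw [hφ₂, hφ₁, hu]
    have : f₂ - A₂ (φ₀ + K₁ r₁) = r₂ - A₂ (K₁ r₁) := by
      rw [map_add, hr₂]; abel
    rw [this]; abel
  have hMu : M u = (adjoint A₁) (Rinv r₁) + (adjoint A₂) (Rinv r₂) := by
    rw [hu, map_add, map_sub K₂, map_sub M]
    rw [← hfinal r₁, q2a r₂]
    rw [map_sub M]
    abel
  have hMinvM : ∀ x, Minv (M x) = x := by
    intro x
    have := ContinuousLinearMap.ext_iff.mp hMinv₁ x
    simpa [hMdef, hM₁def, ContinuousLinearMap.comp_apply] using this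
  rw [hφ₂u, ← hMu, hMinvM u]
end

section
/- Let X, Y be Hilbert spaces, A : X → Y a nonzero bounded linear operator, f ∈ Y, and for α > 0 let φ(α) = (αI + A*A)^{-1} A* f. Then the residual function α ↦ ‖f − A φ(α)‖ is monotonically nondecreasing on (0, ∞), tends to ‖f‖ as α → ∞, and tends to the distance from f to the closure of the range of A as α → 0⁺. -/
/-!
The normal equation `(αI + A*A) φ(α) = A* f` says exactly that `φ(α)` minimizes the Tikhonov
functional `J_α(ψ) = ‖f - Aψ‖² + α‖ψ‖²`; everything follows from this variational
characterization. Comparing `J_α` and `J_β` at each other's minimizers shows that the penalty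
`‖φ(α)‖²` decreases and the residual increases with `α`. Comparing with `ψ = 0` gives
`α‖φ(α)‖² ≤ ‖f‖²`, so `φ(α) → 0` as `α → ∞`. As `α → 0⁺`, the residual stays above
`dist(f, ran A)` and, for every fixed `ψ`, eventually below `√J_α(ψ) → ‖f - Aψ‖`.
-/

open ContinuousLinearMap Filter Topology

theorem monotoneOn_fidelity_of_penalized_minimizers {E : Type*} {R P : E → ℝ} {u : ℝ → E} {s : Set ℝ}
    (hs : s ⊆ Set.Ici 0) (hmin : ∀ α ∈ s, ∀ ψ, R (u α) + α * P (u α) ≤ R ψ + α * P ψ) :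
    MonotoneOn (fun α => R (u α)) s := by
  intro a ha b hb hab
  have hmin_a := hmin a ha (u b)
  have hmin_b := hmin b hb (u a)
  rcases hab.lt_or_eq with hlt | rfl
  · have hP : P (u b) ≤ P (u a) := by nlinarith
    show R (u a) ≤ R (u b)
    nlinarith [mul_nonneg (hs ha) (sub_nonneg.2 hP)]
  · exact le_rfl

section Tikhonov

variable {𝕜 X Y : Type*} [RCLike 𝕜] [NormedAddCommGroup X] [InnerProductSpace 𝕜 X]
  [NormedAddCommGroup Y] [InnerProductSpace 𝕜 Y]

def tikhonovFunctional (A : X →L[𝕜] Y) (f : Y) (α : ℝ) (ψ : X) : ℝ :=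
  ‖f - A ψ‖ ^ 2 + α * ‖ψ‖ ^ 2

theorem tikhonovFunctional_add_of_normal_eq [CompleteSpace X] [CompleteSpace Y]
    {A : X →L[𝕜] Y} {f : Y} {α : ℝ} {u : X}
    (hu : ((α : 𝕜) • ContinuousLinearMap.id 𝕜 X + (adjoint A).comp A) u = adjoint A f) (v : X) :
    tikhonovFunctional A f α (u + v) = tikhonovFunctional A f α u + ‖A v‖ ^ 2 + α * ‖v‖ ^ 2 := by
  have hres : adjoint A (f - A u) = (α : 𝕜) • u := by
    rw [map_sub, ← hu]
    simp
  have hcross : RCLike.re (inner 𝕜 (f - A u) (A v)) = α * RCLike.re (inner 𝕜 u v) := by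
    rw [← adjoint_inner_left, hres, inner_smul_left, RCLike.conj_ofReal, RCLike.re_ofReal_mul]
  rw [tikhonovFunctional, tikhonovFunctional, map_add, ← sub_sub, @norm_sub_sq 𝕜, @norm_add_sq 𝕜,
    hcross]
  ring

theorem tikhonovFunctional_le_of_normal_eq [CompleteSpace X] [CompleteSpace Y]
    {A : X →L[𝕜] Y} {f : Y} {α : ℝ} (hα : 0 ≤ α) {u : X}
    (hu : ((α : 𝕜) • ContinuousLinearMap.id 𝕜 X + (adjoint A).comp A) u = adjoint A f) (ψ : X) :
    tikhonovFunctional A f α u ≤ tikhonovFunctional A f α ψ := by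
  have hexp := tikhonovFunctional_add_of_normal_eq hu (ψ - u)
  rw [add_sub_cancel] at hexp
  rw [hexp, add_assoc]
  exact le_add_of_nonneg_right (by positivity)

theorem sq_norm_sub_le_tikhonovFunctional (A : X →L[𝕜] Y) (f : Y) {α : ℝ} (hα : 0 ≤ α) (ψ : X) :
    ‖f - A ψ‖ ^ 2 ≤ tikhonovFunctional A f α ψ :=
  le_add_of_nonneg_right (by positivity)

section Minimizers

variable {A : X →L[𝕜] Y} {f : Y} {φ : ℝ → X}

theorem monotoneOn_norm_sub_of_tikhonov_minimizers
    (hmin : ∀ α ∈ Set.Ioi (0 : ℝ), ∀ ψ,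
      tikhonovFunctional A f α (φ α) ≤ tikhonovFunctional A f α ψ) :
    MonotoneOn (fun α => ‖f - A (φ α)‖) (Set.Ioi 0) := by
  have hsq : MonotoneOn (fun α => ‖f - A (φ α)‖ ^ 2) (Set.Ioi 0) :=
    monotoneOn_fidelity_of_penalized_minimizers (R := fun ψ => ‖f - A ψ‖ ^ 2)
      (P := fun ψ => ‖ψ‖ ^ 2) Set.Ioi_subset_Ici_self hmin
  exact fun a ha b hb hab => (sq_le_sq₀ (norm_nonneg _) (norm_nonneg _)).1 (hsq ha hb hab)

theorem tendsto_atTop_zero_of_tikhonov_minimizers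
    (hmin : ∀ α ∈ Set.Ioi (0 : ℝ), ∀ ψ,
      tikhonovFunctional A f α (φ α) ≤ tikhonovFunctional A f α ψ) :
    Tendsto φ atTop (𝓝 0) := by
  have hbound : ∀ᶠ α in atTop, ‖φ α‖ ≤ √(‖f‖ ^ 2 / α) := by
    filter_upwards [eventually_gt_atTop 0] with α hα
    have hJ := hmin α hα 0
    simp only [tikhonovFunctional, map_zero, sub_zero, norm_zero] at hJ
    apply Real.le_sqrt_of_sq_le
    rw [le_div_iff₀ hα]
    nlinarith [sq_nonneg ‖f - A (φ α)‖]
  have hlim : Tendsto (fun α : ℝ => √(‖f‖ ^ 2 / α)) atTop (𝓝 0) := by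
    have := ((tendsto_const_nhds (x := ‖f‖ ^ 2)).div_atTop tendsto_id).sqrt
    rwa [Real.sqrt_zero] at this
  exact squeeze_zero_norm' hbound hlim

theorem tendsto_nhdsGT_infDist_of_tikhonov_minimizers
    (hmin : ∀ α ∈ Set.Ioi (0 : ℝ), ∀ ψ,
      tikhonovFunctional A f α (φ α) ≤ tikhonovFunctional A f α ψ) :
    Tendsto (fun α => ‖f - A (φ α)‖) (𝓝[>] 0)
      (𝓝 (Metric.infDist f (closure (Set.range A)))) := by
  rw [Metric.infDist_closure]
  refine tendsto_order.2 ⟨fun a ha => ?_, fun b hb => ?_⟩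
  · filter_upwards [self_mem_nhdsWithin] with α _
    exact ha.trans_le (dist_eq_norm f _ ▸ Metric.infDist_le_dist_of_mem ⟨φ α, rfl⟩)
  · obtain ⟨_, ⟨ψ, rfl⟩, hψ⟩ := (Metric.infDist_lt_iff (Set.range_nonempty _)).1 hb
    rw [dist_eq_norm] at hψ
    have hJψ : Tendsto (fun α => √(tikhonovFunctional A f α ψ)) (𝓝[>] 0) (𝓝 ‖f - A ψ‖) := by
      have hcont : Continuous fun α => √(tikhonovFunctional A f α ψ) := by
        unfold tikhonovFunctional; fun_prop
      simpa [tikhonovFunctional] using (hcont.tendsto 0).mono_left nhdsWithin_le_nhds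
    filter_upwards [self_mem_nhdsWithin, hJψ.eventually (gt_mem_nhds hψ)] with α hα hlt
    refine lt_of_le_of_lt (Real.le_sqrt_of_sq_le ?_) hlt
    exact (sq_norm_sub_le_tikhonovFunctional A f (le_of_lt hα) (φ α)).trans (hmin α hα ψ)

end Minimizers

end Tikhonov

theorem tikhonov_residual_monotone_limits_general
    {X Y : Type*} [NormedAddCommGroup X] [InnerProductSpace ℂ X] [CompleteSpace X]
    [NormedAddCommGroup Y] [InnerProductSpace ℂ Y] [CompleteSpace Y]
    (A : X →L[ℂ] Y) (f : Y) (φ : ℝ → X)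
    (hφ : ∀ α : ℝ, 0 < α →
      ((α : ℂ) • (ContinuousLinearMap.id ℂ X) + (adjoint A).comp A) (φ α) = adjoint A f) :
    MonotoneOn (fun α => ‖f - A (φ α)‖) (Set.Ioi (0 : ℝ)) ∧
    Tendsto (fun α => ‖f - A (φ α)‖) atTop (nhds ‖f‖) ∧
    Tendsto (fun α => ‖f - A (φ α)‖) (nhdsWithin 0 (Set.Ioi (0 : ℝ)))
      (nhds (Metric.infDist f (closure (Set.range A)))) := by
  have hmin : ∀ α ∈ Set.Ioi (0 : ℝ), ∀ ψ,
      tikhonovFunctional A f α (φ α) ≤ tikhonovFunctional A f α ψ :=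
    fun α hα => tikhonovFunctional_le_of_normal_eq (le_of_lt hα) (hφ α hα)
  refine ⟨monotoneOn_norm_sub_of_tikhonov_minimizers hmin, ?_,
    tendsto_nhdsGT_infDist_of_tikhonov_minimizers hmin⟩
  simpa [Function.comp_def] using ((continuous_const.sub A.continuous).norm.tendsto 0).comp
    (tendsto_atTop_zero_of_tikhonov_minimizers hmin)

/-- For the Tikhonov solutions `φ(α)` of `(αI + A*A) φ(α) = A* f`, the residual
`α ↦ ‖f − A φ(α)‖` is nondecreasing on `(0, ∞)`, tends to `‖f‖` as `α → ∞`, and tends to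
the distance from `f` to the closure of the range of `A` as `α → 0⁺`. -/
theorem tikhonov_residual_monotone_limits
    {X Y : Type*} [NormedAddCommGroup X] [InnerProductSpace ℂ X] [CompleteSpace X]
    [NormedAddCommGroup Y] [InnerProductSpace ℂ Y] [CompleteSpace Y]
    (A : X →L[ℂ] Y) (hA : A ≠ 0) (f : Y) (φ : ℝ → X)
    (hφ : ∀ α : ℝ, 0 < α →
      ((α : ℂ) • (ContinuousLinearMap.id ℂ X) + (adjoint A).comp A) (φ α) = adjoint A f) :
    MonotoneOn (fun α => ‖f - A (φ α)‖) (Set.Ioi (0 : ℝ)) ∧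
    Tendsto (fun α => ‖f - A (φ α)‖) atTop (nhds ‖f‖) ∧
    Tendsto (fun α => ‖f - A (φ α)‖) (nhdsWithin 0 (Set.Ioi (0 : ℝ)))
      (nhds (Metric.infDist f (closure (Set.range A)))) :=
  tikhonov_residual_monotone_limits_general A f φ hφ
end

section
/- Let X be a Hilbert space, W ⊆ X a finite-dimensional subspace, K ⊆ W a compact set, and F : K → Y a continuous injective map into a Hilbert space Y. Then F has a continuous inverse on its image; moreover, if additionally there exists no sequence of pairs (q₁ⁿ, q₂ⁿ) ∈ K × K with ‖q₁ⁿ − q₂ⁿ‖ bounded away from 0 and ‖F(q₁ⁿ) − F(q₂ⁿ)‖ → 0, and F is C¹ on a neighborhood of K with injective derivatives, then there exists C > 0 with ‖q₁ − q₂‖ ≤ C ‖F(q₁) − F(q₂)‖ for all q₁, q₂ ∈ K. -/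
/-!
Near a diagonal point `(a, a)` of `K × K`, `F` is strictly differentiable at `a` and `F'[a]` is
bounded below on the finite-dimensional `W`, which contains all differences of points of `K`;
away from the diagonal, `‖F q₁ - F q₂‖` stays away from `0` by continuity and injectivity.
So `‖q₁ - q₂‖ ≤ C ‖F q₁ - F q₂‖` holds locally on `K × K`, and compactness makes `C` uniform.
The inverse on `F '' K` is continuous because `F` maps closed subsets of `K` to compact sets.
-/

open Filter Set Function Topology

theorem IsCompact.continuousOn_invFunOn {α β : Type*} [TopologicalSpace α] [Nonempty α]
    [TopologicalSpace β] [T2Space β] {f : α → β} {s : Set α} (hs : IsCompact s)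
    (hf : ContinuousOn f s) (hinj : InjOn f s) : ContinuousOn (invFunOn f s) (f '' s) := by
  rw [continuousOn_iff_isClosed]
  intro C hC
  refine ⟨f '' (C ∩ s),
    ((hs.inter_left hC).image_of_continuousOn (hf.mono inter_subset_right)).isClosed, ?_⟩
  rw [hinj.leftInvOn_invFunOn.image_inter', inter_assoc, inter_self]

theorem IsCompact.exists_pos_forall_le_mul {α : Type*} [TopologicalSpace α] {s : Set α}
    (hs : IsCompact s) {u v : α → ℝ} (hv : ∀ x ∈ s, 0 ≤ v x)
    (hloc : ∀ x ∈ s, ∃ C, ∀ᶠ y in 𝓝[s] x, u y ≤ C * v y) :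
    ∃ C > 0, ∀ x ∈ s, u x ≤ C * v x := by
  refine hs.induction_on (p := fun t => ∃ C > 0, ∀ x ∈ s ∩ t, u x ≤ C * v x)
    ⟨1, one_pos, by simp⟩ ?_ ?_ ?_ |>.imp fun C ⟨hC, h⟩ => ⟨hC, fun x hx => h x ⟨hx, hx⟩⟩
  · exact fun t t' htt' ⟨C, hC, h⟩ => ⟨C, hC, fun x hx => h x ⟨hx.1, htt' hx.2⟩⟩
  · rintro t t' ⟨C, hC, h⟩ ⟨C', -, h'⟩
    refine ⟨max C C', lt_max_of_lt_left hC, ?_⟩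
    rintro x ⟨hxs, hx | hx⟩
    · exact (h x ⟨hxs, hx⟩).trans (mul_le_mul_of_nonneg_right (le_max_left _ _) (hv x hxs))
    · exact (h' x ⟨hxs, hx⟩).trans (mul_le_mul_of_nonneg_right (le_max_right _ _) (hv x hxs))
  · intro x hx
    obtain ⟨C, hC⟩ := hloc x hx
    refine ⟨_, hC, max C 1, lt_max_of_lt_right one_pos, fun y ⟨hys, hy⟩ => ?_⟩
    exact hy.trans (mul_le_mul_of_nonneg_right (le_max_left _ _) (hv y hys))

section Normed

variable {𝕜 E F : Type*} [NontriviallyNormedField 𝕜]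
  [NormedAddCommGroup E] [NormedSpace 𝕜 E] [NormedAddCommGroup F] [NormedSpace 𝕜 F]

theorem Submodule.exists_pos_norm_le_mul_norm_apply [CompleteSpace 𝕜] (W : Submodule 𝕜 E)
    [FiniteDimensional 𝕜 W] {f : E →L[𝕜] F} (hf : InjOn f W) :
    ∃ C > 0, ∀ v ∈ W, ‖v‖ ≤ C * ‖f v‖ := by
  have hker : LinearMap.ker (f.toLinearMap.comp W.subtype) = ⊥ :=
    LinearMap.ker_eq_bot.mpr fun x y h => Subtype.ext (hf x.2 y.2 h)
  obtain ⟨C, hC, hanti⟩ := LinearMap.exists_antilipschitzWith _ hker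
  exact ⟨C, hC, fun v hv => ZeroHomClass.bound_of_antilipschitz _ hanti ⟨v, hv⟩⟩

theorem HasStrictFDerivAt.eventually_norm_sub_le_mul {f : E → F} {f' : E →L[𝕜] F} {a : E}
    (hf : HasStrictFDerivAt f f' a) {S : Set E} {C : ℝ} (hC : 0 < C)
    (hS : ∀ v ∈ S, ‖v‖ ≤ C * ‖f' v‖) :
    ∀ᶠ p in 𝓝 (a, a), p.1 - p.2 ∈ S → ‖p.1 - p.2‖ ≤ 2 * C * ‖f p.1 - f p.2‖ := by
  filter_upwards [hf.isLittleO.def (inv_pos.mpr (mul_pos two_pos hC))] with p hp hpS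
  set d := p.1 - p.2
  have hf'd : ‖f' d‖ ≤ ‖f p.1 - f p.2‖ + (2 * C)⁻¹ * ‖d‖ := calc
    ‖f' d‖ = ‖(f p.1 - f p.2) - (f p.1 - f p.2 - f' d)‖ := by rw [sub_sub_cancel]
    _ ≤ ‖f p.1 - f p.2‖ + ‖f p.1 - f p.2 - f' d‖ := norm_sub_le _ _
    _ ≤ ‖f p.1 - f p.2‖ + (2 * C)⁻¹ * ‖d‖ := add_le_add le_rfl hp
  have : ‖d‖ ≤ C * ‖f p.1 - f p.2‖ + ‖d‖ / 2 := calc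
    ‖d‖ ≤ C * ‖f' d‖ := hS d hpS
    _ ≤ C * (‖f p.1 - f p.2‖ + (2 * C)⁻¹ * ‖d‖) := by gcongr
    _ = C * ‖f p.1 - f p.2‖ + ‖d‖ / 2 := by field_simp
  linarith

theorem ContinuousOn.exists_eventually_norm_sub_le_mul {f : E → F} {s : Set E}
    (hf : ContinuousOn f s) {a b : E} (ha : a ∈ s) (hb : b ∈ s) (hab : f a ≠ f b) :
    ∃ C, ∀ᶠ p in 𝓝[s ×ˢ s] (a, b), ‖p.1 - p.2‖ ≤ C * ‖f p.1 - f p.2‖ := by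
  have hFab : 0 < ‖f a - f b‖ := norm_pos_iff.mpr (sub_ne_zero.mpr hab)
  set C := (‖a - b‖ + 1) / ‖f a - f b‖
  have hdist : Tendsto (fun p : E × E => ‖p.1 - p.2‖) (𝓝[s ×ˢ s] (a, b)) (𝓝 ‖a - b‖) :=
    (continuous_fst.sub continuous_snd).norm.continuousWithinAt
  have himage : Tendsto (fun p : E × E => C * ‖f p.1 - f p.2‖) (𝓝[s ×ˢ s] (a, b))
      (𝓝 (C * ‖f a - f b‖)) :=
    (((hf.comp continuousOn_fst fun _ hp => hp.1).sub
      (hf.comp continuousOn_snd fun _ hp => hp.2)).norm.const_smul C) (a, b) ⟨ha, hb⟩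
  have hlt : ‖a - b‖ < C * ‖f a - f b‖ := by
    rw [div_mul_cancel₀ _ hFab.ne']
    exact lt_add_one _
  exact ⟨C, (hdist.eventually_lt himage hlt).mono fun _ h => h.le⟩

end Normed

theorem lipschitz_stability_on_compact_general
    {X Y : Type*} [NormedAddCommGroup X] [InnerProductSpace ℂ X]
    [NormedAddCommGroup Y] [InnerProductSpace ℂ Y]
    (W : Submodule ℂ X) (hW : FiniteDimensional ℂ W)
    (K : Set X) (hKW : K ⊆ (W : Set X)) (hK : IsCompact K)
    (F : X → Y) (hFcont : ContinuousOn F K) (hFinj : Set.InjOn F K) :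
    (∃ G : Y → X, ContinuousOn G (F '' K) ∧ ∀ q ∈ K, G (F q) = q) ∧
    ((¬ ∃ (q₁ q₂ : ℕ → X) (ε : ℝ), 0 < ε ∧ (∀ n, q₁ n ∈ K ∧ q₂ n ∈ K) ∧
        (∀ n, ε ≤ ‖q₁ n - q₂ n‖) ∧
        Tendsto (fun n => ‖F (q₁ n) - F (q₂ n)‖) atTop (nhds 0)) →
      ∀ (U : Set X) (F' : X → (X →L[ℂ] Y)), IsOpen U → K ⊆ U →
        (∀ x ∈ U, HasFDerivAt F (F' x) x) → ContinuousOn F' U →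
        (∀ q ∈ K, Function.Injective (F' q)) →
      ∃ C > (0 : ℝ), ∀ q₁ ∈ K, ∀ q₂ ∈ K, ‖q₁ - q₂‖ ≤ C * ‖F q₁ - F q₂‖) := by
  refine ⟨⟨invFunOn F K, hK.continuousOn_invFunOn hFcont hFinj,
    fun q hq => hFinj.leftInvOn_invFunOn hq⟩, fun _ U F' hU hKU hderiv hF'cont hinj => ?_⟩
  suffices ∀ p ∈ K ×ˢ K, ∃ C, ∀ᶠ p' in 𝓝[K ×ˢ K] p, ‖p'.1 - p'.2‖ ≤ C * ‖F p'.1 - F p'.2‖ by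
    obtain ⟨C, hC, hCK⟩ := (hK.prod hK).exists_pos_forall_le_mul (fun _ _ => norm_nonneg _) this
    exact ⟨C, hC, fun q₁ h₁ q₂ h₂ => hCK (q₁, q₂) ⟨h₁, h₂⟩⟩
  rintro ⟨a, b⟩ ⟨ha, hb⟩
  rcases eq_or_ne a b with rfl | hab
  · have haU := hU.mem_nhds (hKU ha)
    have hstrict := hasStrictFDerivAt_of_hasFDerivAt_of_continuousAt
      (eventually_of_mem haU hderiv) (hF'cont.continuousAt haU)
    obtain ⟨C, hC, hCW⟩ := W.exists_pos_norm_le_mul_norm_apply (hinj a ha).injOn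
    refine ⟨2 * C, ?_⟩
    filter_upwards [nhdsWithin_le_nhds (hstrict.eventually_norm_sub_le_mul hC hCW),
      self_mem_nhdsWithin] with p hp hpK
    exact hp (W.sub_mem (hKW hpK.1) (hKW hpK.2))
  · exact hFcont.exists_eventually_norm_sub_le_mul ha hb (hFinj.ne ha hb hab)

/-- Abstract Lipschitz stability on a compact subset of a finite-dimensional subspace.
A continuous injective map `F` on a compact set `K` contained in a finite-dimensional
subspace `W` has a continuous inverse on its image; if moreover no pair of sequences in
`K` stays uniformly separated while their images converge to each other, and `F` is `C¹`
on an open neighborhood of `K` with injective derivatives on `K`, then `F` satisfies a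
Lipschitz stability estimate `‖q₁ − q₂‖ ≤ C ‖F q₁ − F q₂‖` on `K`. -/
theorem lipschitz_stability_on_compact
    {X Y : Type*} [NormedAddCommGroup X] [InnerProductSpace ℂ X] [CompleteSpace X]
    [NormedAddCommGroup Y] [InnerProductSpace ℂ Y] [CompleteSpace Y]
    (W : Submodule ℂ X) (hW : FiniteDimensional ℂ W)
    (K : Set X) (hKW : K ⊆ (W : Set X)) (hK : IsCompact K)
    (F : X → Y) (hFcont : ContinuousOn F K) (hFinj : Set.InjOn F K) :
    (∃ G : Y → X, ContinuousOn G (F '' K) ∧ ∀ q ∈ K, G (F q) = q) ∧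
    ((¬ ∃ (q₁ q₂ : ℕ → X) (ε : ℝ), 0 < ε ∧ (∀ n, q₁ n ∈ K ∧ q₂ n ∈ K) ∧
        (∀ n, ε ≤ ‖q₁ n - q₂ n‖) ∧
        Tendsto (fun n => ‖F (q₁ n) - F (q₂ n)‖) atTop (nhds 0)) →
      ∀ (U : Set X) (F' : X → (X →L[ℂ] Y)), IsOpen U → K ⊆ U →
        (∀ x ∈ U, HasFDerivAt F (F' x) x) → ContinuousOn F' U →
        (∀ q ∈ K, Function.Injective (F' q)) →
      ∃ C > (0 : ℝ), ∀ q₁ ∈ K, ∀ q₂ ∈ K, ‖q₁ - q₂‖ ≤ C * ‖F q₁ - F q₂‖) :=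
  lipschitz_stability_on_compact_general W hW K hKW hK F hFcont hFinj
end
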